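/- arXiv:2007.05236 — 3 statements merged into one kernel-verified Lean document; each statement's English description precedes it below -/
import Mathlib

section
/- Let N ≥ 2 and let a = x₁ < x₂ < ⋯ < x_N = b with values y₁ ≤ y₂ ≤ ⋯ ≤ y_N, cell areas a_i = (x_{i+1} − x_i)(y_{i+1} − y_i) for 1 ≤ i ≤ N − 1, and total area A = Σ_{i=1}^{N−1} a_i. Let i₊ be an index attaining the maximal area a₊ = max_i a_i. If the cell [x_{i₊}, x_{i₊+1}] is split at its midpoint m = (x_{i₊} + x_{i₊+1})/2 with any value y_m satisfying y_{i₊} ≤ y_m ≤ y_{i₊+1}, then the total area A' of the resulting dataset with N + 1 points satisfies A' = A − a₊/2, and consequently A' ≤ A · (1 − 1/(2(N − 1))). -/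
/-!
Splitting cell `i`, of width `d`, at its midpoint gives two cells of areas
`(d/2)(y_m - y_i)` and `(d/2)(y_{i+1} - y_m)`, which add up to `a_i / 2`; all other cells
are unchanged, so `A' = A - a₊/2`. Since `A ≤ (N - 1) a₊`, removing `a₊/2`
removes at least the fraction `1/(2(N-1))` of `A`.
-/

open Finset

def insertAfter {α : Type*} (i : ℕ) (v : α) (f : ℕ → α) (j : ℕ) : α :=
  if j ≤ i then f j else if j = i + 1 then v else f (j - 1)

lemma sum_range_succ_insertAfter {α M : Type*} [AddCommGroup M] (g : α → α → M)
    (f : ℕ → α) (v : α) {i n : ℕ} (hin : i < n) :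
    ∑ j ∈ range (n + 1), g (insertAfter i v f j) (insertAfter i v f (j + 1)) =
      ∑ j ∈ range n, g (f j) (f (j + 1)) - g (f i) (f (i + 1)) + g (f i) v + g v (f (i + 1)) := by
  induction n, hin using Nat.le_induction with
  | base =>
    have hprefix : ∀ j ∈ range i,
        g (insertAfter i v f j) (insertAfter i v f (j + 1)) = g (f j) (f (j + 1)) := by
      intro j hj
      have hj : j < i := mem_range.mp hj
      simp only [insertAfter, if_pos hj.le, if_pos (Nat.succ_le_of_lt hj)]
    rw [sum_range_succ, sum_range_succ, sum_congr rfl hprefix, sum_range_succ]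
    simp [insertAfter]
  | succ n hn ih =>
    have hlast : insertAfter i v f (n + 1) = f n ∧ insertAfter i v f (n + 1 + 1) = f (n + 1) := by
      simp only [insertAfter]
      constructor <;> split_ifs <;> first | omega | rfl
    rw [sum_range_succ, ih, sum_range_succ _ n, hlast.1, hlast.2]
    abel

def cellArea (p q : ℝ × ℝ) : ℝ :=
  (q.1 - p.1) * (q.2 - p.2)

lemma cellArea_add_cellArea_midpoint (p q : ℝ × ℝ) (c : ℝ) :
    cellArea p ((p.1 + q.1) / 2, c) + cellArea ((p.1 + q.1) / 2, c) q = cellArea p q / 2 := by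
  simp only [cellArea]
  ring

lemma sub_half_le_mul_one_sub_inv {K : Type*} [Field K] [LinearOrder K] [IsStrictOrderedRing K]
    {A M k : K} (hk : 0 < k) (hA : A ≤ k * M) :
    A - M / 2 ≤ A * (1 - 1 / (2 * k)) := by
  have hfrac : A / (2 * k) ≤ M / 2 := by
    rw [div_le_div_iff₀ (by positivity) two_pos]
    nlinarith
  calc A - M / 2 ≤ A - A / (2 * k) := by linarith
    _ = A * (1 - 1 / (2 * k)) := by ring

/-- Splitting the cell of maximal area at its midpoint removes exactly half of
the maximal area from the total area, hence contracts the total area by the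
factor `1 - 1/(2(N-1))`. -/
theorem split_max_cell_area (N : ℕ)
    (x y : ℕ → ℝ)
    (area : ℕ → ℝ) (harea : ∀ i, area i = (x (i + 1) - x i) * (y (i + 1) - y i))
    (A : ℝ) (hA : A = ∑ i ∈ Finset.range (N - 1), area i)
    (iMax : ℕ) (hiMax : iMax < N - 1)
    (amax : ℝ) (hamax : amax = (Finset.range (N - 1)).sup'
      (Finset.nonempty_range_iff.mpr (by omega)) area)
    (hattain : area iMax = amax)
    (m : ℝ) (hm : m = (x iMax + x (iMax + 1)) / 2)
    (ym : ℝ)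
    -- the new dataset with N + 1 points obtained by splitting cell iMax at m
    (x' y' : ℕ → ℝ)
    (hx' : ∀ j, x' j = if j ≤ iMax then x j else if j = iMax + 1 then m else x (j - 1))
    (hy' : ∀ j, y' j = if j ≤ iMax then y j else if j = iMax + 1 then ym else y (j - 1))
    (A' : ℝ) (hA' : A' = ∑ j ∈ Finset.range N, (x' (j + 1) - x' j) * (y' (j + 1) - y' j)) :
    A' = A - amax / 2 ∧ A' ≤ A * (1 - 1 / (2 * ((N : ℝ) - 1))) := by
  set p : ℕ → ℝ × ℝ := fun j => (x j, y j)
  have hp' : ∀ j, (x' j, y' j) = insertAfter iMax (m, ym) p j := by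
    intro j
    simp only [hx', hy', insertAfter, p]
    split_ifs <;> rfl
  have harea' : ∀ i, area i = cellArea (p i) (p (i + 1)) := harea
  have hNsucc : N = N - 1 + 1 := by omega
  have hsplit : A' = A - amax / 2 := by
    have hmid := cellArea_add_cellArea_midpoint (p iMax) (p (iMax + 1)) ym
    rw [← hm, ← harea'] at hmid
    have hins := sum_range_succ_insertAfter cellArea p (m, ym) hiMax
    simp only [← hp', ← harea'] at hins
    rw [hA', hNsucc, hA, ← hattain]
    refine hins.trans ?_
    rw [add_assoc, hmid]
    ring
  have hbound : A ≤ ((N : ℝ) - 1) * amax := by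
    have h := sum_le_card_nsmul (range (N - 1)) area amax
      fun i hi => hamax ▸ le_sup' area hi
    rw [card_range, nsmul_eq_mul, Nat.cast_pred (by omega)] at h
    exact hA ▸ h
  have hpos : (0 : ℝ) < (N : ℝ) - 1 := by
    rw [← Nat.cast_pred (by omega)]
    exact_mod_cast (by omega : 0 < N - 1)
  exact ⟨hsplit, hsplit ▸ sub_half_le_mul_one_sub_inv hpos hbound⟩
end

section
/- Let F : ℝ → ℝ be monotone increasing on [a, b], let a = x₁ < x₂ < ⋯ < x_N = b, and let y₁ ≤ ⋯ ≤ y_N satisfy y_i ≤ F(x_i) for every i. Define Fapp(x) = y_i for x ∈ [x_i, x_{i+1}). Then ∫_a^b (F(x) − Fapp(x)) dx ≤ Σ_{i=1}^{N−1} (x_{i+1} − x_i)(y_{i+1} − y_i) + (b − a) · max_{1 ≤ i ≤ N} (F(x_i) − y_i); that is, the L¹ error is bounded by the total area of the dataset plus the length of the interval times the largest node error. -/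
open Finset

/-!
On each cell `[xᵢ, xᵢ₊₁)` the reconstruction is the constant `yᵢ`, and `F ≤ F(xᵢ₊₁)` there by
monotonicity, so the error integral over the cell is at most
`(xᵢ₊₁ - xᵢ) (F(xᵢ₊₁) - yᵢ) = (xᵢ₊₁ - xᵢ) ((yᵢ₊₁ - yᵢ) + (F(xᵢ₊₁) - yᵢ₊₁))`.
Bounding the last node error by the maximal one and summing over the cells, the cell lengths
telescope to `b - a`.
-/

section

open MeasureTheory Set

theorem MonotoneOn.intervalIntegrable_sub_of_eqOn_Ioo {F G : ℝ → ℝ} {u v c : ℝ}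
    (hF : MonotoneOn F (Icc u v)) (huv : u ≤ v) (hG : EqOn G (fun _ => c) (Ioo u v)) :
    IntervalIntegrable (fun t => F t - G t) volume u v := by
  rw [← uIcc_of_le huv] at hF
  refine (hF.intervalIntegrable.sub (intervalIntegrable_const (c := c))).congr_uIoo fun t ht => ?_
  rw [uIoo_of_le huv] at ht
  simp [hG ht]

theorem MonotoneOn.integral_sub_le_of_eqOn_Ioo {F G : ℝ → ℝ} {u v c : ℝ}
    (hF : MonotoneOn F (Icc u v)) (huv : u ≤ v) (hG : EqOn G (fun _ => c) (Ioo u v)) :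
    ∫ t in u..v, (F t - G t) ≤ (v - u) * (F v - c) := by
  have hF' : MonotoneOn F (uIcc u v) := uIcc_of_le huv ▸ hF
  calc ∫ t in u..v, (F t - G t) = ∫ t in u..v, (F t - c) :=
        intervalIntegral.integral_congr_Ioo_of_le huv fun t ht => by simp [hG ht]
    _ ≤ ∫ _ in u..v, (F v - c) :=
        intervalIntegral.integral_mono_on huv
          (hF'.intervalIntegrable.sub intervalIntegrable_const) intervalIntegrable_const
          fun t ht => sub_le_sub_right (hF ht (right_mem_Icc.2 huv) ht.2) c
    _ = (v - u) * (F v - c) := by simp [mul_sub]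

end

/-- The `L¹` error of the reconstruction is bounded by the total area of the
dataset plus the interval length times the largest node error. -/
theorem L1_error_le_total_area_add_node_error (F : ℝ → ℝ) (a b : ℝ)
    (hF : MonotoneOn F (Set.Icc a b))
    (N : ℕ) (hN : 2 ≤ N) (x y : ℕ → ℝ)
    (hxa : x 0 = a) (hxb : x (N - 1) = b)
    (hx : ∀ i, i < N - 1 → x i < x (i + 1))
    (Fapp : ℝ → ℝ)
    (hFapp : ∀ i, i < N - 1 → ∀ t ∈ Set.Ico (x i) (x (i + 1)), Fapp t = y i) :
    ∫ t in a..b, (F t - Fapp t) ≤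
      (∑ i ∈ Finset.range (N - 1), (x (i + 1) - x i) * (y (i + 1) - y i)) +
        (b - a) * (Finset.range N).sup' (Finset.nonempty_range_iff.mpr (by omega))
          (fun i => F (x i) - y i) := by
  set M := (Finset.range N).sup' (Finset.nonempty_range_iff.mpr (by omega))
      (fun i => F (x i) - y i)
  have hxmono : MonotoneOn x (Set.Iic (N - 1)) :=
    (strictMonoOn_Iic_of_lt_succ fun i hi => by simpa using hx i hi).monotoneOn
  have hcell : ∀ i < N - 1, MonotoneOn F (Set.Icc (x i) (x (i + 1))) := fun i hi =>
    hF.mono <| Set.Icc_subset_Icc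
      (hxa ▸ hxmono (by simp) (by simp; omega) (Nat.zero_le i))
      (hxb ▸ hxmono (by simp; omega) (by simp) (by omega))
  have hFapp' : ∀ i < N - 1, Set.EqOn Fapp (fun _ => y i) (Set.Ioo (x i) (x (i + 1))) :=
    fun i hi t ht => hFapp i hi t (Set.Ioo_subset_Ico_self ht)
  have hsplit := intervalIntegral.sum_integral_adjacent_intervals fun i hi =>
    (hcell i hi).intervalIntegrable_sub_of_eqOn_Ioo (hx i hi).le (hFapp' i hi)
  rw [hxa, hxb] at hsplit
  rw [← hsplit]
  calc ∑ i ∈ range (N - 1), ∫ t in x i..x (i + 1), (F t - Fapp t)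
      ≤ ∑ i ∈ range (N - 1), (x (i + 1) - x i) * ((y (i + 1) - y i) + M) := by
        refine sum_le_sum fun i hi => ?_
        rw [mem_range] at hi
        refine ((hcell i hi).integral_sub_le_of_eqOn_Ioo (hx i hi).le (hFapp' i hi)).trans ?_
        have hnode : F (x (i + 1)) - y (i + 1) ≤ M :=
          le_sup' (fun i => F (x i) - y i) (mem_range.2 (by omega))
        exact mul_le_mul_of_nonneg_left (by linarith) (sub_nonneg.2 (hx i hi).le)
    _ = _ := by
        rw [← hxa, ← hxb, ← sum_range_sub x, sum_mul, ← sum_add_distrib]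
        simp only [mul_add]
end

section
/- Let F : ℝ → ℝ be monotone increasing on [a, b]. For each n ∈ ℕ, let a dataset be given: points a = x₁⁽ⁿ⁾ < ⋯ < x_{N_n}⁽ⁿ⁾ = b and monotone values y₁⁽ⁿ⁾ ≤ ⋯ ≤ y_{N_n}⁽ⁿ⁾ with y_i⁽ⁿ⁾ ≤ F(x_i⁽ⁿ⁾) for every i, with reconstruction Fapp⁽ⁿ⁾(x) = y_i⁽ⁿ⁾ on [x_i⁽ⁿ⁾, x_{i+1}⁽ⁿ⁾). If the total areas A_n = Σ_i (x_{i+1}⁽ⁿ⁾ − x_i⁽ⁿ⁾)(y_{i+1}⁽ⁿ⁾ − y_i⁽ⁿ⁾) tend to 0 and the maximal node errors ε_n = max_i (F(x_i⁽ⁿ⁾) − y_i⁽ⁿ⁾) tend to 0 as n → ∞, then ∫_a^b |F(x) − Fapp⁽ⁿ⁾(x)| dx → 0 as n → ∞. -/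
open Filter Finset
open MeasureTheory

/-- If the total areas of a sequence of datasets tend to zero and the maximal
node errors tend to zero, then the reconstructions converge to the increasing
ground truth in the `L¹` norm. -/
theorem L1_convergence_of_area_and_node_error (F : ℝ → ℝ) (a b : ℝ)
    (hF : MonotoneOn F (Set.Icc a b))
    (N : ℕ → ℕ) (hN : ∀ n, 2 ≤ N n) (x y : ℕ → ℕ → ℝ)
    (hxa : ∀ n, x n 0 = a) (hxb : ∀ n, x n (N n - 1) = b)
    (hx : ∀ n i, i < N n - 1 → x n i < x n (i + 1))
    (hy_mono : ∀ n i, i < N n - 1 → y n i ≤ y n (i + 1))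
    (hy : ∀ n i, i < N n → y n i ≤ F (x n i))
    (Fapp : ℕ → ℝ → ℝ)
    (hFapp : ∀ n i, i < N n - 1 → ∀ t ∈ Set.Ico (x n i) (x n (i + 1)), Fapp n t = y n i)
    (A : ℕ → ℝ)
    (hA : ∀ n, A n = ∑ i ∈ Finset.range (N n - 1),
      (x n (i + 1) - x n i) * (y n (i + 1) - y n i))
    (ε : ℕ → ℝ)
    (hε : ∀ n, ε n = (Finset.range (N n)).sup'
      (Finset.nonempty_range_iff.mpr (by have := hN n; omega))
      (fun i => F (x n i) - y n i))
    (hA0 : Tendsto A atTop (nhds 0))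
    (hε0 : Tendsto ε atTop (nhds 0)) :
    Tendsto (fun n => ∫ t in a..b, |F t - Fapp n t|) atTop (nhds 0) := by
  have hxmono : ∀ n i j, i ≤ j → j ≤ N n - 1 → x n i ≤ x n j := by
    intro n i j hij hjM
    induction j with
    | zero => obtain rfl := Nat.le_zero.mp hij; exact le_rfl
    | succ k ih =>
      rcases Nat.eq_or_lt_of_le hij with h | h
      · rw [h]
      · exact le_trans (ih (by omega) (by omega)) (hx n k (by omega)).le
  have hab : a ≤ b := by
    rw [← hxa 0, ← hxb 0]
    exact hxmono 0 0 _ (Nat.zero_le _) le_rfl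
  have key : ∀ n, 0 ≤ (∫ t in a..b, |F t - Fapp n t|) ∧
      (∫ t in a..b, |F t - Fapp n t|) ≤ A n + ε n * (b - a) := by
    intro n
    have hNn := hN n
    have hmem : ∀ i, i ≤ N n - 1 → x n i ∈ Set.Icc a b := by
      intro i hi
      constructor
      · rw [← hxa n]; exact hxmono n 0 i (Nat.zero_le _) hi
      · rw [← hxb n]; exact hxmono n i _ hi le_rfl
    have hεn : ∀ i, i < N n → F (x n i) - y n i ≤ ε n := by
      intro i hi
      rw [hε n]
      exact Finset.le_sup' (fun i => F (x n i) - y n i) (Finset.mem_range.mpr hi)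
    have hgInt : ∀ i, i < N n - 1 →
        IntervalIntegrable (fun t => F t - y n i) volume (x n i) (x n (i+1)) := by
      intro i hi
      have h1 : MonotoneOn F (Set.uIcc (x n i) (x n (i+1))) := by
        rw [Set.uIcc_of_le (hx n i hi).le]
        exact hF.mono (Set.Icc_subset_Icc (hmem i (by omega)).1 (hmem (i+1) (by omega)).2)
      exact h1.intervalIntegrable.sub intervalIntegrable_const
    have haeq : ∀ i, i < N n - 1 → ∀ᵐ t : ℝ, t ∈ Set.uIoc (x n i) (x n (i+1)) →
        |F t - Fapp n t| = F t - y n i := by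
      intro i hi
      have hne : ∀ᵐ t : ℝ, t ≠ x n (i+1) := by
        rw [ae_iff]
        simpa using Real.volume_singleton
      filter_upwards [hne] with t ht hmem'
      rw [Set.uIoc_of_le (hx n i hi).le] at hmem'
      have htI : t ∈ Set.Ico (x n i) (x n (i+1)) :=
        ⟨hmem'.1.le, lt_of_le_of_ne hmem'.2 ht⟩
      have htIcc : t ∈ Set.Icc a b :=
        ⟨le_trans (hmem i (by omega)).1 htI.1, le_trans hmem'.2 (hmem (i+1) (by omega)).2⟩
      rw [hFapp n i hi t htI]
      have : y n i ≤ F t :=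
        le_trans (hy n i (by omega)) (hF (hmem i (by omega)) htIcc htI.1)
      rw [abs_of_nonneg (by linarith)]
    have hfInt : ∀ i, i < N n - 1 →
        IntervalIntegrable (fun t => |F t - Fapp n t|) volume (x n i) (x n (i+1)) := by
      intro i hi
      have hg := hgInt i hi
      rw [intervalIntegrable_iff] at hg ⊢
      exact hg.congr ((ae_restrict_iff' measurableSet_uIoc).mpr
        ((haeq i hi).mono fun t h ht => (h ht).symm))
    have hsum := intervalIntegral.sum_integral_adjacent_intervals (μ := volume)
      (f := fun t => |F t - Fapp n t|) (a := x n) hfInt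
    rw [hxa n, hxb n] at hsum
    constructor
    · exact intervalIntegral.integral_nonneg hab (fun t _ => abs_nonneg _)
    · rw [← hsum, hA n]
      have hstep : ∀ i ∈ Finset.range (N n - 1),
          (∫ t in x n i..x n (i+1), |F t - Fapp n t|)
          ≤ (x n (i + 1) - x n i) * (y n (i + 1) - y n i) + (x n (i+1) - x n i) * ε n := by
        intro i hi'
        have hi := Finset.mem_range.mp hi'
        have h1 : (∫ t in x n i..x n (i+1), |F t - Fapp n t|)
            = ∫ t in x n i..x n (i+1), (F t - y n i) :=
          intervalIntegral.integral_congr_ae (haeq i hi)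
        have h2 : (∫ t in x n i..x n (i+1), (F t - y n i))
            ≤ (x n (i+1) - x n i) * (F (x n (i+1)) - y n i) := by
          have hmono := intervalIntegral.integral_mono_on (hx n i hi).le (hgInt i hi)
            (intervalIntegrable_const (c := F (x n (i+1)) - y n i))
            (fun t ht => by
              have h5 : F t ≤ F (x n (i+1)) :=
                hF ⟨le_trans (hmem i (by omega)).1 ht.1, le_trans ht.2 (hmem (i+1) (by omega)).2⟩
                  (hmem (i+1) (by omega)) ht.2
              exact sub_le_sub_right h5 _)
          simp only [intervalIntegral.integral_const, smul_eq_mul] at hmono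
          nlinarith [hmono]
        have h3 : F (x n (i+1)) - y n i ≤ (y n (i+1) - y n i) + ε n := by
          have := hεn (i+1) (by omega)
          linarith
        have h4 : (0:ℝ) ≤ x n (i+1) - x n i := by linarith [hx n i hi]
        have h6 := mul_le_mul_of_nonneg_left h3 h4
        rw [h1]
        nlinarith
      calc (∑ i ∈ Finset.range (N n - 1), ∫ t in x n i..x n (i+1), |F t - Fapp n t|)
          ≤ ∑ i ∈ Finset.range (N n - 1),
            ((x n (i + 1) - x n i) * (y n (i + 1) - y n i) + (x n (i+1) - x n i) * ε n) :=
            Finset.sum_le_sum hstep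
        _ = (∑ i ∈ Finset.range (N n - 1), (x n (i + 1) - x n i) * (y n (i + 1) - y n i))
            + ε n * (b - a) := by
            rw [Finset.sum_add_distrib, ← Finset.sum_mul, Finset.sum_range_sub (f := x n),
              hxa n, hxb n, mul_comm]
  have hlim : Tendsto (fun n => A n + ε n * (b - a)) atTop (nhds 0) := by
    have := hA0.add (hε0.mul_const (b - a))
    simpa using this
  exact squeeze_zero (fun n => (key n).1) (fun n => (key n).2) hlim
end
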